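/- arXiv:1610.05292 — 3 statements merged into one kernel-verified Lean document; each statement's English description precedes it below -/
import Mathlib

section
/- Let D be a digraph with girth g such that D contains no closed walk of even length less than 2g. Then the direct product C₂ × D has girth exactly 2g. -/
/-- A closed walk of length `ℓ` in a digraph with arc relation `A`. -/
def IsClosedWalk {V : Type} (A : V → V → Prop) (ℓ : ℕ) (w : Fin (ℓ + 1) → V) : Prop :=
  w 0 = w (Fin.last ℓ) ∧ ∀ i : Fin ℓ, A (w i.castSucc) (w i.succ)

/-- The digraph has a (directed) cycle of length `ℓ`: a closed walk of positive
length `ℓ` whose first `ℓ` vertices are pairwise distinct. -/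
def IsCycleOfLength {V : Type} (A : V → V → Prop) (ℓ : ℕ) : Prop :=
  0 < ℓ ∧ ∃ w : Fin (ℓ + 1) → V, IsClosedWalk A ℓ w ∧
    Function.Injective (fun i : Fin ℓ => w i.castSucc)

/-- The digraph has girth `g`: it has a cycle of length `g` and no shorter cycle. -/
def HasGirth {V : Type} (A : V → V → Prop) (g : ℕ) : Prop :=
  IsLeast {ℓ | IsCycleOfLength A ℓ} g

/-- The direct product of two digraphs. -/
def prodRel {V₁ V₂ : Type} (A₁ : V₁ → V₁ → Prop) (A₂ : V₂ → V₂ → Prop) :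
    V₁ × V₂ → V₁ × V₂ → Prop :=
  fun a b => A₁ a.1 b.1 ∧ A₂ a.2 b.2

/-- The directed cycle on `p` vertices: arcs `i → i + 1` on `ZMod p`. -/
def cycleRel (p : ℕ) : ZMod p → ZMod p → Prop := fun i j => j = i + 1

/-- If `D` has girth `g` and no closed walk of even length less than `2g`, then
`C₂ × D` has girth exactly `2g`. -/
theorem girth_C2_prod {V : Type} (A : V → V → Prop) (g : ℕ)
    (hg : HasGirth A g)
    (hwalk : ∀ ℓ : ℕ, Even ℓ → 0 < ℓ → ℓ < 2 * g →
      ¬ ∃ w : Fin (ℓ + 1) → V, IsClosedWalk A ℓ w) :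
    HasGirth (prodRel (cycleRel 2) A) (2 * g) := by
  obtain ⟨⟨hgpos, w, ⟨hclosed, harc⟩, hinj⟩, hlb⟩ := hg
  -- g is odd
  have hgodd : g % 2 = 1 := by
    rcases Nat.even_or_odd g with he | ho
    · exact (hwalk g he hgpos (by omega) ⟨w, hclosed, harc⟩).elim
    · exact Nat.odd_iff.mp ho
  -- periodic extension
  set w' : ℕ → V := fun n => w ⟨n % g, Nat.lt_succ_of_lt (Nat.mod_lt n hgpos)⟩ with hw'
  have harc' : ∀ n : ℕ, A (w' n) (w' (n + 1)) := by
    intro n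
    have hk : n % g < g := Nat.mod_lt n hgpos
    have h1 := harc ⟨n % g, hk⟩
    have hcs : (Fin.castSucc ⟨n % g, hk⟩ : Fin (g + 1)) =
        ⟨n % g, Nat.lt_succ_of_lt hk⟩ := rfl
    rw [hcs] at h1
    have hmod : (n + 1) % g = (n % g + 1) % g := by
      simp [Nat.add_mod]
    by_cases hlt : n % g + 1 < g
    · have : (n + 1) % g = n % g + 1 := by
        rw [hmod, Nat.mod_eq_of_lt hlt]
      show A (w ⟨n % g, _⟩) (w ⟨(n + 1) % g, _⟩)
      have hsucc : (Fin.succ ⟨n % g, hk⟩ : Fin (g + 1)) =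
          ⟨(n + 1) % g, Nat.lt_succ_of_lt (Nat.mod_lt _ hgpos)⟩ := by
        apply Fin.ext; simp [this]
      rw [hsucc] at h1
      exact h1
    · have hg1 : n % g + 1 = g := by omega
      have : (n + 1) % g = 0 := by rw [hmod, hg1, Nat.mod_self]
      show A (w ⟨n % g, _⟩) (w ⟨(n + 1) % g, _⟩)
      have h0 : (⟨(n + 1) % g, Nat.lt_succ_of_lt (Nat.mod_lt _ hgpos)⟩ : Fin (g + 1)) =
          (0 : Fin (g + 1)) := by apply Fin.ext; simp [this]
      rw [h0, hclosed]
      have hsucc : (Fin.succ ⟨n % g, hk⟩ : Fin (g + 1)) = Fin.last g := by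
        apply Fin.ext; simp [hg1, Fin.last]
      rw [hsucc] at h1
      exact h1
  constructor
  · -- membership: cycle of length 2g
    refine ⟨by omega, fun i => ((i.val : ZMod 2), w' i.val), ⟨?_, ?_⟩, ?_⟩
    · apply Prod.ext
      · show ((((0 : Fin (2 * g + 1)).val : ℕ) : ZMod 2)) = (((Fin.last (2 * g)).val : ℕ) : ZMod 2)
        simp only [Fin.val_zero, Fin.last, Nat.cast_zero]
        exact ((ZMod.natCast_eq_zero_iff _ 2).mpr ⟨g, rfl⟩).symm
      · show w' (0 : Fin (2 * g + 1)).val = w' (Fin.last (2 * g)).val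
        simp only [Fin.val_zero, Fin.last]
        simp [hw', Nat.mul_mod_right]
    · intro i
      constructor
      · show ((i.succ.val : ℕ) : ZMod 2) = ((i.castSucc.val : ℕ) : ZMod 2) + 1
        simp [Fin.val_succ, Fin.coe_castSucc]
      · show A (w' i.castSucc.val) (w' i.succ.val)
        simp only [Fin.val_succ, Fin.coe_castSucc]
        exact harc' i.val
    · -- injectivity
      intro i j hij
      simp only [Prod.mk.injEq, Fin.coe_castSucc] at hij
      obtain ⟨h1, h2⟩ := hij
      have hpar : (i : ℕ) % 2 = (j : ℕ) % 2 := by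
        have := (ZMod.natCast_eq_natCast_iff' (i : ℕ) (j : ℕ) 2).mp h1
        simpa using this
      have hmg : (i : ℕ) % g = (j : ℕ) % g := by
        have hik : (i : ℕ) % g < g := Nat.mod_lt _ hgpos
        have hjk : (j : ℕ) % g < g := Nat.mod_lt _ hgpos
        have := hinj (a₁ := ⟨(i : ℕ) % g, hik⟩) (a₂ := ⟨(j : ℕ) % g, hjk⟩) (by
          simpa [Fin.castSucc] using h2)
        simpa using congrArg Fin.val this
      -- i, j < 2g, same residue mod g, same parity, g odd ⇒ i = j
      have hi2 : (i : ℕ) < 2 * g := i.isLt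
      have hj2 : (j : ℕ) < 2 * g := j.isLt
      have hdi := Nat.div_add_mod (i : ℕ) g
      have hdj := Nat.div_add_mod (j : ℕ) g
      have hqi : (i : ℕ) / g < 2 := Nat.div_lt_of_lt_mul (by omega)
      have hqj : (j : ℕ) / g < 2 := Nat.div_lt_of_lt_mul (by omega)
      have : (i : ℕ) = (j : ℕ) := by
        interval_cases h : (i : ℕ) / g <;> interval_cases h' : (j : ℕ) / g <;> omega
      exact Fin.ext this
  · -- lower bound
    intro ℓ hℓ
    obtain ⟨hpos, W, ⟨hc, ha⟩, _⟩ := hℓ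
    by_contra hcon
    push_neg at hcon
    have key : ∀ n (hn : n < ℓ + 1), (W ⟨n, hn⟩).1 = (W 0).1 + (n : ZMod 2) := by
      intro n
      induction n with
      | zero => intro hn; simp
      | succ m ih =>
        intro hn
        have hm : m < ℓ := by omega
        have h1 := (ha ⟨m, hm⟩).1
        have hcs : (Fin.castSucc ⟨m, hm⟩ : Fin (ℓ + 1)) = ⟨m, by omega⟩ := rfl
        have hsc : (Fin.succ ⟨m, hm⟩ : Fin (ℓ + 1)) = ⟨m + 1, hn⟩ := rfl
        rw [hcs, hsc] at h1
        rw [h1, ih (by omega)]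
        push_cast
        ring
    have hdvd : (2 : ℕ) ∣ ℓ := by
      have h1 := key ℓ (by omega)
      have h2 : (⟨ℓ, by omega⟩ : Fin (ℓ + 1)) = Fin.last ℓ := rfl
      rw [h2, ← hc] at h1
      have : ((ℓ : ℕ) : ZMod 2) = 0 := by
        have := left_eq_add.mp h1
        exact this
      exact (ZMod.natCast_eq_zero_iff ℓ 2).mp this
    have heven : Even ℓ := by obtain ⟨k, hk⟩ := hdvd; exact ⟨k, by omega⟩
    exact hwalk ℓ heven hpos hcon ⟨fun i => (W i).2, congrArg Prod.snd hc, fun i => (ha i).2⟩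
end

section
/- Let p ≥ 2 and let D be a digraph with girth g that contains no closed walk of length ip for i = 1, ..., g−1. Then the direct product C_p × D has girth exactly pg. -/
section Aux

variable {V : Type} {A : V → V → Prop}

/-- In a closed walk in a product with `C_p`, the first coordinate advances by one
each step. -/
lemma fst_walk {p ℓ : ℕ} {w : Fin (ℓ + 1) → ZMod p × V}
    (hw : IsClosedWalk (prodRel (cycleRel p) A) ℓ w) :
    ∀ j : ℕ, (hj : j ≤ ℓ) → (w ⟨j, Nat.lt_succ_of_le hj⟩).1 = (w 0).1 + (j : ZMod p) := by
  intro j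
  induction j with
  | zero => intro _; simp
  | succ j ih =>
    intro hj
    have hjlt : j < ℓ := by omega
    have harc := (hw.2 ⟨j, hjlt⟩).1
    have h1 : (w ⟨j + 1, Nat.lt_succ_of_le hj⟩).1 = (w ⟨j, Nat.lt_succ_of_le (le_of_lt hjlt)⟩).1 + 1 := by
      have hc : (⟨j, hjlt⟩ : Fin ℓ).castSucc = ⟨j, Nat.lt_succ_of_le (le_of_lt hjlt)⟩ := rfl
      have hs : (⟨j, hjlt⟩ : Fin ℓ).succ = ⟨j + 1, Nat.lt_succ_of_le hj⟩ := rfl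
      rw [hc, hs] at harc
      exact harc
    rw [h1, ih (le_of_lt hjlt)]
    push_cast
    ring

/-- Any positive closed walk in the product has length divisible by `p`. -/
lemma p_dvd_of_walk {p ℓ : ℕ} (hp : 2 ≤ p) {w : Fin (ℓ + 1) → ZMod p × V}
    (hw : IsClosedWalk (prodRel (cycleRel p) A) ℓ w) : p ∣ ℓ := by
  haveI : NeZero p := ⟨by omega⟩
  have h := fst_walk hw ℓ le_rfl
  have hlast : (⟨ℓ, Nat.lt_succ_of_le le_rfl⟩ : Fin (ℓ + 1)) = Fin.last ℓ := rfl
  rw [hlast, ← hw.1] at h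
  have hz : (ℓ : ZMod p) = 0 := by linear_combination -h
  exact (ZMod.natCast_eq_zero_iff ℓ p).mp hz

/-- Transport a closed walk along an equality of lengths. -/
lemma walk_congr {ℓ ℓ' : ℕ} (h : ℓ = ℓ') (w : Fin (ℓ + 1) → V) (hw : IsClosedWalk A ℓ w) :
    ∃ w' : Fin (ℓ' + 1) → V, IsClosedWalk A ℓ' w' := by
  subst h; exact ⟨w, hw⟩

/-- A periodic-style ℕ-indexed walk gives a closed walk. -/
lemma natWalk_closed (n : ℕ) (v : ℕ → V) (hstep : ∀ k, A (v k) (v (k + 1)))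
    (hcl : v n = v 0) : IsClosedWalk A n (fun j : Fin (n + 1) => v j.val) := by
  constructor
  · simp [Fin.val_zero, Fin.val_last, hcl]
  · intro j
    show A (v j.castSucc.val) (v j.succ.val)
    simp only [Fin.coe_castSucc, Fin.val_succ]
    exact hstep j.val

end Aux

/-- If `p ≥ 2` and `D` has girth `g` with no closed walk of length `i * p` for
`i = 1, ..., g - 1`, then `C_p × D` has girth exactly `p * g`. -/
theorem girth_Cp_prod (p : ℕ) (hp : 2 ≤ p) {V : Type} (A : V → V → Prop) (g : ℕ)
    (hg : HasGirth A g)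
    (hwalk : ∀ i : ℕ, 1 ≤ i → i ≤ g - 1 →
      ¬ ∃ w : Fin (i * p + 1) → V, IsClosedWalk A (i * p) w) :
    HasGirth (prodRel (cycleRel p) A) (p * g) := by
  obtain ⟨⟨g0, w, hw, hinj⟩, hmin⟩ := hg
  haveI : NeZero p := ⟨by omega⟩
  -- the ℕ-indexed cyclic walk in D
  have hmlt : ∀ k : ℕ, k % g < g + 1 := fun k => lt_of_lt_of_le (Nat.mod_lt k g0) (Nat.le_succ g)
  set c : ℕ → V := fun k => w ⟨k % g, hmlt k⟩ with hc
  have cmod : ∀ k : ℕ, c k = c (k % g) := by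
    intro k
    simp only [hc]
    congr 1
    exact Fin.ext (by simp [Nat.mod_mod_of_dvd])
  have cval : ∀ m : ℕ, (hm : m < g) → c m = w ((⟨m, hm⟩ : Fin g).castSucc) := by
    intro m hm
    simp only [hc]
    congr 1
    exact Fin.ext (by simp [Nat.mod_eq_of_lt hm])
  have cstep : ∀ k : ℕ, A (c k) (c (k + 1)) := by
    intro k
    have hr : k % g < g := Nat.mod_lt k g0
    have harc := hw.2 ⟨k % g, hr⟩
    have hmod : (k + 1) % g = (k % g + 1) % g := (Nat.mod_add_mod k g 1).symm
    have e1 : c k = w ((⟨k % g, hr⟩ : Fin g).castSucc) := (cmod k).trans (cval _ hr)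
    rcases Nat.lt_or_ge (k % g + 1) g with hlt | hge
    · have h2 : (k + 1) % g = k % g + 1 := by rw [hmod, Nat.mod_eq_of_lt hlt]
      have e2 : c (k + 1) = w ((⟨k % g, hr⟩ : Fin g).succ) := by
        simp only [hc]; congr 1; exact Fin.ext (by simp [h2])
      rw [e1, e2]; exact harc
    · have hg1 : k % g + 1 = g := by omega
      have h2 : (k + 1) % g = 0 := by rw [hmod, hg1, Nat.mod_self]
      have e2 : c (k + 1) = w 0 := by
        simp only [hc]; congr 1; exact Fin.ext (by simp [h2])
      have e3 : (⟨k % g, hr⟩ : Fin g).succ = Fin.last g := Fin.ext (by simp [hg1])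
      rw [e1, e2, hw.1, ← e3]; exact harc
  have cinj : ∀ j j' : ℕ, j < g → j' < g → c j = c j' → j = j' := by
    intro j j' hj hj' hcc
    rw [cval j hj, cval j' hj'] at hcc
    have h2 : (⟨j, hj⟩ : Fin g) = ⟨j', hj'⟩ := hinj hcc
    exact congrArg Fin.val h2
  -- coprimality of p and g from the walk hypothesis
  have hcop : Nat.Coprime p g := by
    by_contra hnc
    set d := Nat.gcd p g with hd
    have hdp : d ∣ p := Nat.gcd_dvd_left p g
    have hdg : d ∣ g := Nat.gcd_dvd_right p g
    have hd2 : 2 ≤ d := by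
      have hd0 : d ≠ 0 := by
        intro h0
        have := Nat.eq_zero_of_gcd_eq_zero_left (hd ▸ h0)
        omega
      have hd1 : d ≠ 1 := hnc
      omega
    set i := g / d with hi
    have hig : i * d = g := Nat.div_mul_cancel hdg
    have hi1 : 1 ≤ i := by
      rcases Nat.eq_zero_or_pos i with h0 | h1
      · rw [h0] at hig; omega
      · exact h1
    have hilt : i < g := by nlinarith
    have hcl : c (i * p) = c 0 := by
      obtain ⟨m, hm⟩ := hdp
      have : i * p = g * m := by rw [hm, ← hig]; ring
      rw [this, cmod, Nat.mul_mod_right]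
    exact hwalk i hi1 (by omega) ⟨_, natWalk_closed (i * p) c cstep hcl⟩
  constructor
  · -- membership: the diagonal cycle of length p * g
    refine ⟨by positivity, fun j : Fin (p * g + 1) => ((j.val : ZMod p), c j.val), ?_, ?_⟩
    · constructor
      · have h1 : ((p * g : ℕ) : ZMod p) = 0 :=
          (ZMod.natCast_eq_zero_iff (p * g) p).mpr (dvd_mul_right p g)
        have h2 : c (p * g) = c 0 := by rw [cmod, Nat.mul_mod_left]
        refine Prod.ext ?_ ?_
        · show ((((0 : Fin (p * g + 1)).val : ℕ)) : ZMod p) = (((Fin.last (p * g)).val : ℕ) : ZMod p)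
          simp [Fin.val_zero, Fin.val_last, h1]
        · show c (0 : Fin (p * g + 1)).val = c (Fin.last (p * g)).val
          simp [Fin.val_zero, Fin.val_last, h2]
      · intro j
        constructor
        · show ((j.succ.val : ℕ) : ZMod p) = ((j.castSucc.val : ℕ) : ZMod p) + 1
          simp only [Fin.val_succ, Fin.coe_castSucc]
          push_cast
          ring
        · show A (c j.castSucc.val) (c j.succ.val)
          simp only [Fin.coe_castSucc, Fin.val_succ]
          exact cstep j.val
    · -- injectivity via CRT
      intro j j' hjj
      have hfst : ((j.castSucc.val : ℕ) : ZMod p) = ((j'.castSucc.val : ℕ) : ZMod p) :=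
        congrArg Prod.fst hjj
      have hsnd : c j.castSucc.val = c j'.castSucc.val := congrArg Prod.snd hjj
      simp only [Fin.coe_castSucc] at hfst hsnd
      have hmp : j.val ≡ j'.val [MOD p] := (ZMod.natCast_eq_natCast_iff _ _ _).mp hfst
      have hmg : j.val ≡ j'.val [MOD g] := by
        rw [cmod j.val, cmod j'.val] at hsnd
        exact cinj _ _ (Nat.mod_lt _ g0) (Nat.mod_lt _ g0) hsnd
      have hmpg : j.val ≡ j'.val [MOD p * g] :=
        (Nat.modEq_and_modEq_iff_modEq_mul hcop).mp ⟨hmp, hmg⟩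
      have := hmpg
      unfold Nat.ModEq at this
      rw [Nat.mod_eq_of_lt j.isLt, Nat.mod_eq_of_lt j'.isLt] at this
      exact Fin.ext this
  · -- lower bound
    intro ℓ hℓ
    obtain ⟨hpos, w2, hw2, -⟩ := hℓ
    obtain ⟨i, rfl⟩ := p_dvd_of_walk hp hw2
    by_contra hlt
    push_neg at hlt
    have hi1 : 1 ≤ i := by
      rcases Nat.eq_zero_or_pos i with h0 | h1
      · rw [h0] at hpos; simp at hpos
      · exact h1
    have hig : i < g := Nat.lt_of_mul_lt_mul_left hlt
    have hsnd : IsClosedWalk A (p * i) (fun j => (w2 j).2) :=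
      ⟨congrArg Prod.snd hw2.1, fun j => (hw2.2 j).2⟩
    exact hwalk i hi1 (by omega) (walk_congr (mul_comm p i) _ hsnd)
end

section
/- If a digraph D has girth g (i.e., contains no cycle of length less than g) and contains no even cycle of length less than 2g, then D contains no closed walk of even length less than 2g. -/
lemma mkWalk {V : Type} {A : V → V → Prop} (W : ℕ → V)
    (harc : ∀ n, A (W n) (W (n+1))) (s m : ℕ) (hclose : W (s + m) = W s) :
    ∃ w : Fin (m + 1) → V, IsClosedWalk A m w := by
  refine ⟨fun k => W (s + (k : ℕ)), ?_, ?_⟩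
  · simp [Fin.last, hclose]
  · intro i
    have h1 : ((i.castSucc : Fin (m+1)) : ℕ) = i := rfl
    have h2 : ((i.succ : Fin (m+1)) : ℕ) = (i : ℕ) + 1 := rfl
    simpa [h1, h2, ← Nat.add_assoc] using harc (s + i)

lemma key {V : Type} (A : V → V → Prop) (g : ℕ)
    (hgirth : ∀ ℓ : ℕ, ℓ < g → ¬ IsCycleOfLength A ℓ)
    (heven : ∀ ℓ : ℕ, Even ℓ → ℓ < 2 * g → ¬ IsCycleOfLength A ℓ) :
    ∀ ℓ : ℕ, 0 < ℓ → ℓ < 2 * g → (∃ w : Fin (ℓ + 1) → V, IsClosedWalk A ℓ w) →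
      Odd ℓ ∧ g ≤ ℓ := by
  intro ℓ
  induction ℓ using Nat.strong_induction_on with
  | _ ℓ IH =>
  intro hpos hlt ⟨w, hw⟩
  by_cases hinj : Function.Injective (fun i : Fin ℓ => w i.castSucc)
  · have hcyc : IsCycleOfLength A ℓ := ⟨hpos, w, hw, hinj⟩
    constructor
    · rcases Nat.even_or_odd ℓ with he | ho
      · exact absurd hcyc (heven ℓ he hlt)
      · exact ho
    · by_contra h
      exact hgirth ℓ (by omega) hcyc
  · -- find repetition
    simp only [Function.Injective, not_forall] at hinj
    obtain ⟨i, j, hij, hne⟩ := hinj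
    -- wlog i < j as naturals
    have hne' : (i : ℕ) ≠ (j : ℕ) := fun h => hne (Fin.ext h)
    -- define W
    set W : ℕ → V := fun n => w ⟨n % ℓ, lt_trans (Nat.mod_lt n hpos) (Nat.lt_succ_self ℓ)⟩ with hW
    have hWper : ∀ n, W (n + ℓ) = W n := by
      intro n; simp [hW, Nat.add_mod_right]
    have hWw : ∀ k : Fin ℓ, W (k : ℕ) = w k.castSucc := by
      intro k
      have : (k : ℕ) % ℓ = k := Nat.mod_eq_of_lt k.isLt
      simp [hW]
      congr 1
      exact Fin.ext (by simpa using this)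
    have harc : ∀ n, A (W n) (W (n+1)) := by
      intro n
      have hr : n % ℓ < ℓ := Nat.mod_lt n hpos
      have h := hw.2 ⟨n % ℓ, hr⟩
      have e1 : W n = w (Fin.castSucc ⟨n % ℓ, hr⟩) := rfl
      have e2 : W (n+1) = w (Fin.succ ⟨n % ℓ, hr⟩) := by
        rcases Nat.lt_or_ge (n % ℓ + 1) ℓ with h2 | h2
        · have h1l : (1:ℕ) % ℓ = 1 := Nat.mod_eq_of_lt (by omega)
          have hm : (n+1) % ℓ = n % ℓ + 1 := by
            rw [Nat.add_mod, h1l, Nat.mod_eq_of_lt h2]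
          show w _ = w _
          congr 1
          exact Fin.ext (by simp [hm])
        · have h3 : n % ℓ + 1 = ℓ := by omega
          have h4 : (n+1) % ℓ = 0 := by rw [← Nat.mod_add_mod, h3, Nat.mod_self]
          have h5 : W (n+1) = w 0 := by
            show w _ = w 0; congr 1; exact Fin.ext (by simp [h4])
          rw [h5, hw.1]
          congr 1
          exact Fin.ext (by simp [Fin.last, h3])
      rw [e1, e2]
      exact h
    have hWeq : W (i : ℕ) = W (j : ℕ) := by rw [hWw i, hWw j, hij]
    -- wlog via symmetry: set p = min, q = max
    obtain ⟨p, q, hpq, hWpq⟩ : ∃ p q : ℕ, p < q ∧ q < ℓ ∧ W p = W q := by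
      rcases lt_or_gt_of_ne hne' with h | h
      · exact ⟨i, j, h, j.isLt, hWeq⟩
      · exact ⟨j, i, h, i.isLt, hWeq.symm⟩
    obtain ⟨hqℓ, hWpq⟩ := hWpq
    set a := q - p with ha
    set b := ℓ - a with hb
    have hapos : 0 < a := by omega
    have hbpos : 0 < b := by omega
    have haℓ : a < ℓ := by omega
    have hbℓ : b < ℓ := by omega
    have wa : ∃ w : Fin (a + 1) → V, IsClosedWalk A a w := by
      apply mkWalk W harc p
      have : p + a = q := by omega
      rw [this, hWpq]
    have wb : ∃ w : Fin (b + 1) → V, IsClosedWalk A b w := by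
      apply mkWalk W harc q
      have : q + b = p + ℓ := by omega
      rw [this, hWper, hWpq]
    have Ha := IH a haℓ hapos (by omega) wa
    have Hb := IH b hbℓ hbpos (by omega) wb
    exfalso
    obtain ⟨⟨ka, hka⟩, hga⟩ := Ha
    obtain ⟨⟨kb, hkb⟩, hgb⟩ := Hb
    omega


/-- If a digraph has no cycle of length less than `g` and no even cycle of
length less than `2g`, then it has no closed walk of even length less than `2g`. -/
theorem no_short_even_closed_walk {V : Type} (A : V → V → Prop) (g : ℕ)
    (hgirth : ∀ ℓ : ℕ, ℓ < g → ¬ IsCycleOfLength A ℓ)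
    (heven : ∀ ℓ : ℕ, Even ℓ → ℓ < 2 * g → ¬ IsCycleOfLength A ℓ) :
    ∀ ℓ : ℕ, Even ℓ → 0 < ℓ → ℓ < 2 * g →
      ¬ ∃ w : Fin (ℓ + 1) → V, IsClosedWalk A ℓ w := by
  intro ℓ he hpos hlt hw
  have := (key A g hgirth heven ℓ hpos hlt hw).1
  exact (Nat.not_even_iff_odd.mpr this) he
end
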